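/- Let A be a complex Banach algebra and σ : A → A a bounded algebra endomorphism. There do not exist elements a, b, c ∈ A with aσ(b) − σ(b)a = c satisfying all of: (i) σ(a)σ²(b) − σ²(b)σ(a) = aσ(b) − σ(b)a; (ii) (σ²(b) − σ(b))a = a(σ²(b) − σ(b)); (iii) aσ(c) − σ(c)a = 0; (iv) c is not quasinilpotent. Equivalently, if a, b, c ∈ A satisfy aσ(b) − σ(b)a = c together with (i), (ii), (iii), then c is quasinilpotent. -/

import Mathlib

/-!
Applying `σ` to `c = aσ(b) − σ(b)a` and using (i) gives `σ(c) = c`, so (iii) says that `a`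
commutes with `c = [a, y]`, `y = σ(b)`. This is the situation of the Kleinecke–Shirokov
theorem: for the inner derivation `D = [a, ·]` one has `Dⁿ(yⁿ) = n! cⁿ`, hence
`n! ‖cⁿ‖ ≤ (2‖a‖‖y‖)ⁿ`, and `‖cⁿ‖^(1/n) → 0`.
-/

open Filter ENNReal

def innerDerivation {R : Type*} [Ring R] (a : R) : AddMonoid.End R :=
  AddMonoidHom.mulLeft a - AddMonoidHom.mulRight a

section InnerDerivation

variable {R : Type*} [Ring R] {a c y : R}

@[simp]
theorem innerDerivation_apply (a x : R) : innerDerivation a x = a * x - x * a := rfl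

theorem innerDerivation_pow_succ_apply (n : ℕ) (x : R) :
    (innerDerivation a ^ (n + 1)) x = (innerDerivation a ^ n) (innerDerivation a x) := by
  rw [pow_succ]
  rfl

theorem innerDerivation_mul (a x w : R) :
    innerDerivation a (x * w) = x * innerDerivation a w + innerDerivation a x * w := by
  simp only [innerDerivation_apply]
  noncomm_ring

theorem innerDerivation_pow_apply_mul_left_of_commute (hac : Commute a c) (n : ℕ) (x : R) :
    (innerDerivation a ^ n) (c * x) = c * (innerDerivation a ^ n) x := by
  induction n generalizing x with
  | zero => rfl
  | succ n ih =>
    have hcx : innerDerivation a (c * x) = c * innerDerivation a x := by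
      simp only [innerDerivation_apply, mul_sub, ← mul_assoc, hac.eq]
    rw [innerDerivation_pow_succ_apply, innerDerivation_pow_succ_apply, hcx, ih]

theorem innerDerivation_pow_succ_apply_mul (hac : Commute a c) (hy : innerDerivation a y = c)
    (n : ℕ) (w : R) :
    (innerDerivation a ^ (n + 1)) (y * w) =
      y * (innerDerivation a ^ (n + 1)) w + (n + 1) • (c * (innerDerivation a ^ n) w) := by
  induction n generalizing w with
  | zero =>
    rw [zero_add, pow_one, innerDerivation_mul, hy, one_smul, pow_zero]
    rfl
  | succ n ih =>
    rw [innerDerivation_pow_succ_apply (n + 1), innerDerivation_mul, hy, map_add,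
      innerDerivation_pow_apply_mul_left_of_commute hac, ih, ← innerDerivation_pow_succ_apply,
      ← innerDerivation_pow_succ_apply, succ_nsmul _ (n + 1)]
    abel

theorem innerDerivation_pow_apply_pow_eq_zero (hac : Commute a c) (hy : innerDerivation a y = c)
    {m k : ℕ} (hmk : m < k) : (innerDerivation a ^ k) (y ^ m) = 0 := by
  induction m generalizing k with
  | zero =>
    obtain ⟨k, rfl⟩ := Nat.exists_eq_add_of_lt hmk
    simp [innerDerivation_pow_succ_apply]
  | succ m ih =>
    obtain ⟨k, rfl⟩ := Nat.exists_eq_add_of_lt (Nat.zero_lt_of_lt hmk)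
    rw [zero_add, pow_succ' y, innerDerivation_pow_succ_apply_mul hac hy, ih (by omega),
      ih (by omega)]
    simp

theorem innerDerivation_pow_apply_pow_self (hac : Commute a c) (hy : innerDerivation a y = c)
    (m : ℕ) : (innerDerivation a ^ m) (y ^ m) = m.factorial • c ^ m := by
  induction m with
  | zero => simp
  | succ m ih =>
    rw [pow_succ' y, innerDerivation_pow_succ_apply_mul hac hy, ih,
      innerDerivation_pow_apply_pow_eq_zero hac hy m.lt_succ_self, mul_smul_comm, smul_smul,
      ← pow_succ', Nat.factorial_succ]
    simp

end InnerDerivation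

theorem norm_innerDerivation_pow_apply_le {A : Type*} [NormedRing A] (a x : A) (n : ℕ) :
    ‖(innerDerivation a ^ n) x‖ ≤ (2 * ‖a‖) ^ n * ‖x‖ := by
  induction n generalizing x with
  | zero => simp
  | succ n ih =>
    calc ‖(innerDerivation a ^ (n + 1)) x‖ = ‖(innerDerivation a ^ n) (a * x - x * a)‖ := by
          rw [innerDerivation_pow_succ_apply, innerDerivation_apply]
      _ ≤ (2 * ‖a‖) ^ n * ‖a * x - x * a‖ := ih _
      _ ≤ (2 * ‖a‖) ^ n * (2 * ‖a‖ * ‖x‖) := by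
          gcongr
          calc ‖a * x - x * a‖ ≤ ‖a‖ * ‖x‖ + ‖x‖ * ‖a‖ :=
                (norm_sub_le _ _).trans (add_le_add (norm_mul_le _ _) (norm_mul_le _ _))
            _ = 2 * ‖a‖ * ‖x‖ := by ring
      _ = (2 * ‖a‖) ^ (n + 1) * ‖x‖ := by ring

theorem eventually_le_pow_of_factorial_mul_le {u : ℕ → ℝ} {M : ℝ}
    (h : ∀ᶠ n in atTop, n.factorial * u n ≤ M ^ n) {ε : ℝ} (hε : 0 < ε) :
    ∀ᶠ n in atTop, u n ≤ ε ^ n := by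
  filter_upwards [h, (FloorSemiring.tendsto_pow_div_factorial_atTop (M / ε)).eventually_lt_const
    one_pos] with n hn hlt
  have hfact : (0 : ℝ) < n.factorial := by exact_mod_cast n.factorial_pos
  rw [div_pow, div_div, div_lt_one (by positivity)] at hlt
  rw [← mul_le_mul_iff_of_pos_left hfact]
  nlinarith

theorem spectralRadius_eq_zero_of_eventually_norm_pow_le {𝕜 A : Type*} [NormedField 𝕜]
    [NormedRing A] [NormedAlgebra 𝕜 A] [CompleteSpace A] {c : A}
    (h : ∀ ε : ℝ, 0 < ε → ∀ᶠ n in atTop, ‖c ^ n‖ ≤ ε ^ n) : spectralRadius 𝕜 c = 0 := by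
  refine nonpos_iff_eq_zero.mp (ENNReal.le_of_forall_pos_le_add fun ε hε _ => ?_)
  rw [zero_add]
  refine (spectrum.spectralRadius_le_liminf_pow_nnnorm_pow_one_div 𝕜 c).trans
    (liminf_le_of_frequently_le ?_)
  refine ((h ε hε).and (eventually_ne_atTop 0)).frequently.mono fun n ⟨hn, hn0⟩ => ?_
  calc (‖c ^ n‖₊ : ℝ≥0∞) ^ (1 / n : ℝ) ≤ ((ε : ℝ≥0∞) ^ n) ^ (1 / n : ℝ) := by
        gcongr
        exact_mod_cast hn
    _ = ε := by rw [one_div, ENNReal.pow_rpow_inv_natCast hn0]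

theorem spectralRadius_commutator_eq_zero_of_commute {𝕜 A : Type*} [RCLike 𝕜] [NormedRing A]
    [NormedAlgebra 𝕜 A] [CompleteSpace A] {a y : A} (h : Commute a (a * y - y * a)) :
    spectralRadius 𝕜 (a * y - y * a) = 0 := by
  set c := a * y - y * a
  refine spectralRadius_eq_zero_of_eventually_norm_pow_le fun ε hε =>
    eventually_le_pow_of_factorial_mul_le (M := 2 * ‖a‖ * ‖y‖) ?_ hε
  filter_upwards [eventually_ne_atTop 0] with n hn
  calc n.factorial * ‖c ^ n‖ = ‖(innerDerivation a ^ n) (y ^ n)‖ := by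
        rw [innerDerivation_pow_apply_pow_self h rfl, ← Nat.cast_smul_eq_nsmul 𝕜, norm_smul,
          RCLike.norm_natCast]
    _ ≤ (2 * ‖a‖) ^ n * ‖y ^ n‖ := norm_innerDerivation_pow_apply_le a _ n
    _ ≤ (2 * ‖a‖ * ‖y‖) ^ n := by
        rw [mul_pow (2 * ‖a‖)]
        gcongr
        exact norm_pow_le' y (Nat.pos_of_ne_zero hn)

/-- generalized Wielandt–Wintner theorem: In a complex Banach
algebra with a bounded endomorphism `σ`, there are no `a, b, c` with
`aσ(b) − σ(b)a = c` satisfying (i) `σ(a)σ²(b) − σ²(b)σ(a) = aσ(b) − σ(b)a`,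
(ii) `(σ²(b) − σ(b))a = a(σ²(b) − σ(b))`, (iii) `aσ(c) − σ(c)a = 0`, and
(iv) `c` not quasinilpotent. -/
theorem stmt_17 {A : Type*} [NormedRing A] [NormedAlgebra ℂ A] [CompleteSpace A]
    (σ : A →L[ℂ] A) (hσ : ∀ a b : A, σ (a * b) = σ a * σ b) :
    ¬ ∃ a b c : A,
        a * σ b - σ b * a = c ∧
        σ a * σ (σ b) - σ (σ b) * σ a = a * σ b - σ b * a ∧
        (σ (σ b) - σ b) * a = a * (σ (σ b) - σ b) ∧
        a * σ c - σ c * a = 0 ∧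
        spectralRadius ℂ c ≠ 0 := by
  rintro ⟨a, b, c, rfl, hi, -, hiii, hr⟩
  have hσc : σ (a * σ b - σ b * a) = a * σ b - σ b * a := by
    rw [map_sub, hσ, hσ, hi]
  rw [hσc, sub_eq_zero] at hiii
  exact hr (spectralRadius_commutator_eq_zero_of_commute hiii)
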